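/- arXiv:2508.18030 — 3 statements merged into one kernel-verified Lean document; each statement's English description precedes it below -/
import Mathlib

section
/- Let m be a positive integer and let (a,b) ∈ F_{2^m} × F_{2^m} with (a,b) ≠ (0,0). Define the integer S_2 = Σ_{x ∈ F_{2^m}^*} Σ_{y ∈ F_{2^m}} (−1)^{Tr(yx² + y) + Tr(axy + bx)}. Then: S_2 = −2^m if a = 0, b ≠ 0 and Tr(b) = 1; S_2 = 2^m if a = 0, b ≠ 0 and Tr(b) = 0; S_2 = 0 if a ∉ Υ1 ∪ {0}, or if a ∈ Υ1, b ≠ 0 and Tr(ab) = 1; S_2 = 2^{m+1} if a ∈ Υ1 and b = 0; and S_2 = 2^{m+1} or S_2 = −2^{m+1} if a ∈ Υ1, b ≠ 0 and Tr(ab) = 0. -/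
attribute [local instance] Classical.propDecidable

noncomputable instance (m : ℕ) : Fintype (GaloisField 2 m) := Fintype.ofFinite _

/-- The absolute trace map from `F_{2^m}` to `F_2`. -/
noncomputable def Tr (m : ℕ) (x : GaloisField 2 m) : ZMod 2 :=
  Algebra.trace (ZMod 2) (GaloisField 2 m) x

/-- For `t ∈ F_2`, `sgn t` is the integer `(-1)^t`. -/
def sgn : ZMod 2 → ℤ := fun t => if t = 0 then 1 else -1

/-- The set `Υ₁ = {r + r⁻¹ : r ∈ F_{2^m}^*, r ≠ 1}`. -/
def Ups1 (m : ℕ) : Set (GaloisField 2 m) :=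
  {u | ∃ r : GaloisField 2 m, r ≠ 0 ∧ r ≠ 1 ∧ u = r + r⁻¹}

lemma Tr_add (m : ℕ) (x y : GaloisField 2 m) : Tr m (x + y) = Tr m x + Tr m y :=
  map_add (Algebra.trace (ZMod 2) (GaloisField 2 m)) x y

lemma sgn_add : ∀ s t : ZMod 2, sgn (s + t) = sgn s * sgn t := by decide

lemma card_gf (m : ℕ) (hm : m ≠ 0) : Fintype.card (GaloisField 2 m) = 2 ^ m := by
  have := GaloisField.card 2 m hm
  simpa [Nat.card_eq_fintype_card] using this

lemma gf_inner_sum (m : ℕ) (hm : m ≠ 0) (c : GaloisField 2 m) :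
    ∑ y : GaloisField 2 m, sgn (Tr m (y * c)) = if c = 0 then (2 ^ m : ℤ) else 0 := by
  split_ifs with hc
  · subst hc
    have h1 : ∀ y : GaloisField 2 m, sgn (Tr m (y * 0)) = 1 := by
      intro y; simp [Tr, sgn]
    rw [Finset.sum_congr rfl (fun y _ => h1 y), Finset.sum_const, Finset.card_univ,
      card_gf m hm]
    simp
  · obtain ⟨z, hz⟩ := Algebra.trace_surjective (ZMod 2) (GaloisField 2 m) 1
    set y₀ := z * c⁻¹ with hy₀def
    have hy₀ : Tr m (y₀ * c) = 1 := by
      rw [hy₀def, mul_assoc, inv_mul_cancel₀ hc, mul_one]; exact hz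
    have key : ∑ y : GaloisField 2 m, sgn (Tr m ((y + y₀) * c))
        = ∑ y : GaloisField 2 m, sgn (Tr m (y * c)) :=
      Fintype.sum_equiv (Equiv.addRight y₀) _ _ (fun y => rfl)
    have flip : ∀ y : GaloisField 2 m, sgn (Tr m ((y + y₀) * c)) = - sgn (Tr m (y * c)) := by
      intro y
      have : (y + y₀) * c = y * c + y₀ * c := by ring
      rw [this, Tr_add, hy₀]
      have : ∀ s : ZMod 2, sgn (s + 1) = - sgn s := by decide
      exact this _
    rw [Finset.sum_congr rfl (fun y _ => flip y), Finset.sum_neg_distrib] at key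
    linarith

lemma Tr_zero (m : ℕ) : Tr m 0 = 0 :=
  map_zero (Algebra.trace (ZMod 2) (GaloisField 2 m))

lemma zmod_case1 : ∀ s t : ZMod 2, s + t = 1 → sgn s + sgn t = 0 := by decide

lemma zmod_case0 : ∀ s t : ZMod 2, s + t = 0 → sgn s + sgn t = 2 ∨ sgn s + sgn t = -2 := by
  decide

lemma add_eq_zero_iff_char2 {R : Type*} [Ring R] [CharP R 2] (u v : R) :
    u + v = 0 ↔ u = v := by
  rw [add_eq_zero_iff_eq_neg, CharTwo.neg_eq]

lemma gf_sq_inj (m : ℕ) {u v : GaloisField 2 m} (h : u ^ 2 = v ^ 2) : u = v := by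
  apply frobenius_inj (GaloisField 2 m) 2
  rwa [frobenius_def, frobenius_def]

theorem stmt5 (m : ℕ) (hm : 0 < m) (a b : GaloisField 2 m) (hab : (a, b) ≠ (0, 0)) :
    let S2 : ℤ := ∑ x ∈ Finset.univ.filter (fun x : GaloisField 2 m => x ≠ 0),
      ∑ y : GaloisField 2 m, sgn (Tr m (y * x ^ 2 + y) + Tr m (a * x * y + b * x))
    (a = 0 → b ≠ 0 → Tr m b = 1 → S2 = -(2 ^ m : ℤ)) ∧
    (a = 0 → b ≠ 0 → Tr m b = 0 → S2 = 2 ^ m) ∧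
    (a ∉ Ups1 m → a ≠ 0 → S2 = 0) ∧
    (a ∈ Ups1 m → b ≠ 0 → Tr m (a * b) = 1 → S2 = 0) ∧
    (a ∈ Ups1 m → b = 0 → S2 = 2 ^ (m + 1)) ∧
    (a ∈ Ups1 m → b ≠ 0 → Tr m (a * b) = 0 →
      S2 = 2 ^ (m + 1) ∨ S2 = -(2 ^ (m + 1) : ℤ)) := by
  intro S2
  set T : Finset (GaloisField 2 m) :=
    (Finset.univ.filter (fun x : GaloisField 2 m => x ≠ 0)).filter (fun x => x ^ 2 + a * x + 1 = 0) with hT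
  have master : S2 = 2 ^ m * ∑ x ∈ T, sgn (Tr m (b * x)) := by
    have hx_inner : ∀ x : GaloisField 2 m,
        (∑ y : GaloisField 2 m, sgn (Tr m (y * x ^ 2 + y) + Tr m (a * x * y + b * x)))
          = if x ^ 2 + a * x + 1 = 0 then 2 ^ m * sgn (Tr m (b * x)) else 0 := by
      intro x
      have h1 : ∀ y : GaloisField 2 m, Tr m (y * x ^ 2 + y) + Tr m (a * x * y + b * x)
          = Tr m (y * (x ^ 2 + a * x + 1)) + Tr m (b * x) := by
        intro y
        rw [← Tr_add, ← Tr_add]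
        congr 1
        ring
      calc (∑ y : GaloisField 2 m, sgn (Tr m (y * x ^ 2 + y) + Tr m (a * x * y + b * x)))
          = ∑ y : GaloisField 2 m, sgn (Tr m (y * (x ^ 2 + a * x + 1))) * sgn (Tr m (b * x)) := by
            exact Finset.sum_congr rfl (fun y _ => by rw [h1 y, sgn_add])
        _ = (∑ y : GaloisField 2 m, sgn (Tr m (y * (x ^ 2 + a * x + 1)))) * sgn (Tr m (b * x)) :=
            (Finset.sum_mul _ _ _).symm
        _ = (if x ^ 2 + a * x + 1 = 0 then (2 ^ m : ℤ) else 0) * sgn (Tr m (b * x)) := by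
            rw [gf_inner_sum m hm.ne' (x ^ 2 + a * x + 1)]
        _ = if x ^ 2 + a * x + 1 = 0 then 2 ^ m * sgn (Tr m (b * x)) else 0 := by
            split_ifs <;> ring
    calc S2 = ∑ x ∈ Finset.univ.filter (fun x : GaloisField 2 m => x ≠ 0),
          (if x ^ 2 + a * x + 1 = 0 then 2 ^ m * sgn (Tr m (b * x)) else 0) :=
        Finset.sum_congr rfl (fun x _ => hx_inner x)
      _ = ∑ x ∈ T, 2 ^ m * sgn (Tr m (b * x)) := (Finset.sum_filter _ _).symm
      _ = 2 ^ m * ∑ x ∈ T, sgn (Tr m (b * x)) := by rw [Finset.mul_sum]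
  have h2 : (1 : GaloisField 2 m) + 1 = 0 := CharTwo.add_self_eq_zero 1
  -- Case a = 0 : T = {1}
  have hT0 : a = 0 → T = {1} := by
    intro ha
    ext x
    simp only [hT, Finset.mem_filter, Finset.mem_univ, true_and, Finset.mem_singleton]
    constructor
    · rintro ⟨hx0, hroot⟩
      have hx2 : x ^ 2 = 1 ^ 2 := by
        rw [ha] at hroot
        linear_combination hroot - h2
      exact gf_sq_inj m hx2
    · rintro rfl
      refine ⟨one_ne_zero, ?_⟩
      rw [ha]
      linear_combination h2
  -- Case a ∈ Ups1 : T = {r, r⁻¹}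
  have hTU : ∀ r : GaloisField 2 m, r ≠ 0 → r ≠ 1 → a = r + r⁻¹ →
      T = {r, r⁻¹} ∧ r ≠ r⁻¹ := by
    intro r hr0 hr1 har
    have hinv : r * r⁻¹ = 1 := mul_inv_cancel₀ hr0
    have hrr : r ≠ r⁻¹ := by
      intro h
      apply hr1
      apply gf_sq_inj m
      have : r ^ 2 = r * r⁻¹ := by rw [← h]; ring
      rw [this, hinv, one_pow]
    have hfact : ∀ x : GaloisField 2 m, x ^ 2 + a * x + 1 = (x + r) * (x + r⁻¹) := by
      intro x
      rw [har]
      linear_combination - hinv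
    refine ⟨?_, hrr⟩
    ext x
    simp only [hT, Finset.mem_filter, Finset.mem_univ, true_and, Finset.mem_insert,
      Finset.mem_singleton]
    constructor
    · rintro ⟨hx0, hroot⟩
      rw [hfact, mul_eq_zero] at hroot
      rcases hroot with h | h
      · exact Or.inl (add_eq_zero_iff_char2 x r |>.mp h)
      · exact Or.inr (add_eq_zero_iff_char2 x r⁻¹ |>.mp h)
    · rintro (rfl | rfl)
      · exact ⟨hr0, by rw [hfact, (add_eq_zero_iff_char2 _ _).mpr rfl, zero_mul]⟩
      · refine ⟨inv_ne_zero hr0, ?_⟩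
        rw [hfact, (add_eq_zero_iff_char2 _ _).mpr rfl, mul_zero]
  -- a = 0 value
  have hval0 : a = 0 → S2 = 2 ^ m * sgn (Tr m b) := by
    intro ha
    rw [master, hT0 ha, Finset.sum_singleton, mul_one]
  refine ⟨?_, ?_, ?_, ?_, ?_, ?_⟩
  · intro ha hb htr
    rw [hval0 ha, htr]
    simp [sgn]
  · intro ha hb htr
    rw [hval0 ha, htr]
    simp [sgn]
  · intro hup ha
    have hTe : T = ∅ := by
      ext x
      simp only [hT, Finset.mem_filter, Finset.mem_univ, true_and, Finset.notMem_empty,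
        iff_false, not_and]
      intro hx0 hroot
      apply hup
      have hinv : x * x⁻¹ = 1 := mul_inv_cancel₀ hx0
      have hx1 : x ≠ 1 := by
        rintro rfl
        apply ha
        linear_combination hroot - h2
      refine ⟨x, hx0, hx1, ?_⟩
      have hax : a * x = (x + x⁻¹) * x := by
        linear_combination hroot - (x ^ 2 + 1) * h2 - hinv
      exact mul_right_cancel₀ hx0 hax
    rw [master, hTe, Finset.sum_empty, mul_zero]
  · rintro ⟨r, hr0, hr1, har⟩ hb htr
    obtain ⟨hTr, hrr⟩ := hTU r hr0 hr1 har
    rw [master, hTr, Finset.sum_pair hrr]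
    have hsum : Tr m (b * r) + Tr m (b * r⁻¹) = Tr m (a * b) := by
      rw [← Tr_add]
      congr 1
      rw [har]
      ring
    rw [htr] at hsum
    rw [zmod_case1 _ _ hsum, mul_zero]
  · rintro ⟨r, hr0, hr1, har⟩ hb
    obtain ⟨hTr, hrr⟩ := hTU r hr0 hr1 har
    rw [master, hTr, Finset.sum_pair hrr, hb]
    simp only [zero_mul, Tr_zero]
    show (2 : ℤ) ^ m * (sgn 0 + sgn 0) = 2 ^ (m + 1)
    norm_num [sgn, pow_succ]
  · rintro ⟨r, hr0, hr1, har⟩ hb htr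
    obtain ⟨hTr, hrr⟩ := hTU r hr0 hr1 har
    rw [master, hTr, Finset.sum_pair hrr]
    have hsum : Tr m (b * r) + Tr m (b * r⁻¹) = Tr m (a * b) := by
      rw [← Tr_add]
      congr 1
      rw [har]
      ring
    rw [htr] at hsum
    rcases zmod_case0 _ _ hsum with h | h
    · left; rw [h, pow_succ]
    · right; rw [h, pow_succ]; ring
end

section
/- Let m be an odd positive integer. Then #D_2 = 2^m(2^{m−1} − 1), where D_2 = {(x,y) ∈ F_{2^m}^* × F_{2^m} : Tr(yx² + x + y) = 0}. -/
attribute [local instance] Classical.propDecidable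

/-!
For fixed `x ≠ 0` the argument of the trace is the affine function `(x² + 1) y + x` of `y`.
When `x = 1` it is the constant `1`, whose trace is `m = 1` in `F₂` because `m` is odd, so
this fibre is empty. Otherwise `x² + 1 = (x + 1)² ≠ 0`, so the fibre is in bijection with the
kernel of the surjective trace, which has `2^(m-1)` elements. Summing over the `2^m - 2`
remaining values of `x` gives the count.
-/

open Finset

theorem card_filter_trace_eq_zero_mul_card (K L : Type*) [Field K] [Field L] [Fintype K]
    [Fintype L] [Algebra K L] :
    #{z : L | Algebra.trace K L z = 0} * Fintype.card K = Fintype.card L := by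
  let f := (Algebra.trace K L).toAddMonoidHom
  have hrange : f.range = ⊤ := AddMonoidHom.range_eq_top.mpr (Algebra.trace_surjective K L)
  have := f.ker.card_mul_index
  rw [AddSubgroup.index_ker, hrange] at this
  simpa [f, Nat.card_eq_fintype_card, Fintype.card_subtype] using this

theorem card_filter_comp_affine {K : Type*} [DivisionRing K] [Fintype K] (P : K → Prop)
    [DecidablePred P] {a : K} (ha : a ≠ 0) (b : K) :
    #{y | P (a * y + b)} = #{z | P z} :=
  card_equiv ((Equiv.mulLeft₀ a ha).trans (Equiv.addRight b)) (by simp)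

theorem two_pow_succ_sub_two_mul (k : ℕ) :
    (2 ^ (k + 1) - 2) * 2 ^ k = 2 ^ (k + 1) * (2 ^ k - 1) := by
  have : 1 ≤ 2 ^ k := Nat.one_le_two_pow
  have : 2 ≤ 2 ^ (k + 1) := by rw [pow_succ]; omega
  zify [*]
  ring

theorem card_filter_not_eq_zero_or_eq_one (R : Type*) [NonAssocSemiring R] [Nontrivial R]
    [Fintype R] : #{x : R | ¬(x = 0 ∨ x = 1)} = Fintype.card R - 2 := by
  rw [filter_not, card_sdiff_of_subset (subset_univ _), card_univ,
    show ({x | x = 0 ∨ x = 1} : Finset R) = {0, 1} by ext; simp, card_pair zero_ne_one]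

theorem Tr_one_of_odd {m : ℕ} (hodd : Odd m) : Tr m 1 = 1 := by
  rw [Tr, ← map_one (algebraMap (ZMod 2) _), Algebra.trace_algebraMap,
    GaloisField.finrank 2 hodd.pos.ne', nsmul_eq_mul, mul_one,
    ZMod.natCast_eq_one_iff_odd.mpr hodd]

theorem card_filter_Tr_eq_zero {m : ℕ} (hm : m ≠ 0) : #{z | Tr m z = 0} = 2 ^ (m - 1) := by
  have h := card_filter_trace_eq_zero_mul_card (ZMod 2) (GaloisField 2 m)
  obtain ⟨k, rfl⟩ := Nat.exists_eq_add_one_of_ne_zero hm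
  rw [ZMod.card, ← Nat.card_eq_fintype_card, GaloisField.card 2 _ hm, pow_succ] at h
  convert Nat.eq_of_mul_eq_mul_right two_pos h using 3 <;> rfl

theorem card_filter_Tr_mul_sq_add_eq_zero {m : ℕ} (hodd : Odd m) (x : GaloisField 2 m) :
    #{y | x ≠ 0 ∧ Tr m (y * x ^ 2 + x + y) = 0} =
      if x = 0 ∨ x = 1 then 0 else 2 ^ (m - 1) := by
  by_cases hx0 : x = 0
  · simp [hx0]
  by_cases hx1 : x = 1
  · have hcancel : ∀ y : GaloisField 2 m, y + 1 + y = 1 := fun y => by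
      rw [add_right_comm, CharTwo.add_self_eq_zero, zero_add]
    simp [hx1, hcancel, Tr_one_of_odd hodd]
  have hsq : x ^ 2 + 1 ≠ 0 := by
    rwa [Ne, CharTwo.add_eq_zero, ← one_pow 2, CharTwo.sq_inj]
  rw [if_neg (by tauto), ← card_filter_Tr_eq_zero hodd.pos.ne',
    ← card_filter_comp_affine (fun z => Tr m z = 0) hsq x]
  congr! 4 with y
  simp only [ne_eq, hx0, not_false_eq_true, true_and]
  rw [show y * x ^ 2 + x + y = (x ^ 2 + 1) * y + x by ring]

theorem stmt9_general (m : ℕ) (hodd : Odd m) :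
    (Finset.univ.filter (fun p : GaloisField 2 m × GaloisField 2 m =>
        p.1 ≠ 0 ∧ Tr m (p.2 * p.1 ^ 2 + p.1 + p.2) = 0)).card =
      2 ^ m * (2 ^ (m - 1) - 1) := by
  rw [card_filter, Fintype.sum_prod_type]
  simp_rw [← card_filter, card_filter_Tr_mul_sq_add_eq_zero hodd, sum_ite, sum_const_zero,
    zero_add, sum_const, smul_eq_mul]
  rw [card_filter_not_eq_zero_or_eq_one, ← Nat.card_eq_fintype_card,
    GaloisField.card 2 m hodd.pos.ne']
  obtain ⟨k, rfl⟩ := Nat.exists_eq_add_one_of_ne_zero hodd.pos.ne'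
  exact two_pow_succ_sub_two_mul k

theorem stmt9 (m : ℕ) (hm : 0 < m) (hodd : Odd m) :
    (Finset.univ.filter (fun p : GaloisField 2 m × GaloisField 2 m =>
        p.1 ≠ 0 ∧ Tr m (p.2 * p.1 ^ 2 + p.1 + p.2) = 0)).card =
      2 ^ m * (2 ^ (m - 1) - 1) :=
  stmt9_general m hodd
end

section
/- Let m ≥ 3 be odd and let (a,b) ∈ F_{2^m} × F_{2^m} with (a,b) ≠ (0,0). Then the weight wt(c(a,b)) = #{(x,y) ∈ D_2 : Tr(axy + bx) = 1} satisfies: wt(c(a,b)) = 2^{m−1}(2^{m−1} − 1) if a = 0, b ≠ 0 and Tr(b) = 1, or if a ∉ Υ1 ∪ {0}, or if a ∈ Υ1 and Tr((b+1)a) = 1; otherwise wt(c(a,b)) ∈ {2^m(2^{m−2} − 1), 2^{2m−2}}. -/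
attribute [local instance] Classical.propDecidable

/-!
For fixed `x ≠ 0` the conditions on `y` read `Tr((x² + 1) y) = Tr x` and `Tr(a x y) = Tr(b x) + 1`.
For `α ≠ 0` the form `y ↦ Tr(α y)` is onto `F₂`, and two such forms with `α ≠ β` are jointly onto
`F₂²` because the trace form is nondegenerate; so a row `x` has `2^(m-2)` solutions unless
`a x ∈ {0, x² + 1}`. The row `x = 1` is empty since `Tr 1 = 1` for odd `m`. For `a = 0` a row has
`2^(m-1)` solutions exactly when `Tr(b x) = 1`. For `a ≠ 0` the exceptional rows are the roots of
`X² + a X + 1`, which exist exactly when `a = r + r⁻¹ ∈ Υ₁` and are then `r` and `r⁻¹`; such a row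
has `2^(m-1)` or `0` solutions according to `Tr((b + 1) x)`, and
`Tr((b + 1) r) + Tr((b + 1) r⁻¹) = Tr((b + 1) a)` decides how many of the two contribute.
-/

open Finset

theorem AddMonoidHom.card_fiber_mul_card_of_surjective {G H : Type*} [AddGroup G] [Fintype G]
    [AddMonoid H] [Fintype H] [DecidableEq H] (f : G →+ H) (hf : Function.Surjective f) (h : H) :
    #{g | f g = h} * Fintype.card H = Fintype.card G := by
  calc #{g | f g = h} * Fintype.card H = ∑ h' : H, #{g | f g = h'} := by
        rw [sum_congr rfl fun h' _ => AddMonoidHom.card_fiber_eq_of_mem_range f (hf h') (hf h),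
          sum_const, card_univ, smul_eq_mul, mul_comm]
    _ = Fintype.card G := (card_eq_sum_card_fiberwise (by simp)).symm

theorem ZMod.eq_zero_or_eq_one_of_two (t : ZMod 2) : t = 0 ∨ t = 1 := by
  revert t
  decide

theorem linearIndependent_zmod_two_pair {V : Type*} [AddCommGroup V] [Module (ZMod 2) V]
    {x y : V} (hx : x ≠ 0) (hy : y ≠ 0) (hxy : x ≠ y) : LinearIndependent (ZMod 2) ![x, y] := by
  refine LinearIndependent.pair_iff.2 fun s t hst => ?_
  rcases s.eq_zero_or_eq_one_of_two with rfl | rfl <;>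
    rcases t.eq_zero_or_eq_one_of_two with rfl | rfl
  · exact ⟨rfl, rfl⟩
  · exact absurd (by simpa using hst) hy
  · exact absurd (by simpa using hst) hx
  · refine absurd ?_ hxy
    rw [one_smul, one_smul] at hst
    rw [eq_neg_of_add_eq_zero_left hst, ← neg_one_smul (ZMod 2) y,
      show (-1 : ZMod 2) = 1 from rfl, one_smul]

theorem Finset.card_filter_prod_eq_sum {α β : Type*} [Fintype α] [Fintype β] (P : α → Prop)
    (Q : α → β → Prop) [DecidablePred P] [∀ x, DecidablePred (Q x)] :
    #{p : α × β | P p.1 ∧ Q p.1 p.2} = ∑ x ∈ {x | P x}, #{y | Q x y} := by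
  rw [card_filter, Fintype.sum_prod_type, sum_filter]
  simp only [card_filter, ite_and, ite_sum_zero]

section Trace

variable (K : Type*) {L : Type*} [Field K] [Field L] [Algebra K L] [FiniteDimensional K L]
  [Algebra.IsSeparable K L]

theorem Algebra.trace_mul_left_surjective {α : L} (hα : α ≠ 0) :
    Function.Surjective fun y => Algebra.trace K L (α * y) := fun c => by
  obtain ⟨y, rfl⟩ := Algebra.trace_surjective K L c
  exact ⟨α⁻¹ * y, by simp only [mul_inv_cancel_left₀ hα]⟩

theorem Algebra.trace_mul_left_prod_surjective {α β : L} (h : LinearIndependent K ![α, β]) :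
    Function.Surjective fun y => (Algebra.trace K L (α * y), Algebra.trace K L (β * y)) := by
  let Φ : L →ₗ[K] K × K := ((Algebra.trace K L).comp (LinearMap.mulLeft K α)).prod
    ((Algebra.trace K L).comp (LinearMap.mulLeft K β))
  change Function.Surjective Φ
  rw [← LinearMap.range_eq_top]
  by_contra hne
  obtain ⟨f, hf0, hf⟩ := Submodule.exists_dual_map_eq_bot_of_lt_top (lt_top_iff_ne_top.2 hne)
    inferInstance
  have hvanish : ∀ y, Algebra.trace K L ((f (1, 0) • α + f (0, 1) • β) * y) = 0 := fun y => by
    have hΦ : Φ y = Algebra.trace K L (α * y) • ((1 : K), (0 : K)) +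
        Algebra.trace K L (β * y) • ((0 : K), (1 : K)) := by ext <;> simp [Φ]
    calc Algebra.trace K L ((f (1, 0) • α + f (0, 1) • β) * y)
        = f (Φ y) := by
          simp only [hΦ, map_add, map_smul, add_mul, smul_mul_assoc, smul_eq_mul]
          ring
      _ = 0 := by
        rw [← Submodule.mem_bot K, ← hf]
        exact Submodule.mem_map_of_mem (LinearMap.mem_range_self Φ y)
  have hzero : f (1, 0) • α + f (0, 1) • β = 0 := by
    by_contra hz
    obtain ⟨y, hy⟩ := Algebra.trace_mul_left_surjective K hz 1
    exact one_ne_zero (hy.symm.trans (hvanish y))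
  obtain ⟨h1, h2⟩ := LinearIndependent.pair_iff.1 h _ _ hzero
  exact hf0 (LinearMap.prod_ext (LinearMap.ext_ring h1) (LinearMap.ext_ring h2))

variable [Fintype K] [DecidableEq K] [Fintype L]

theorem Algebra.card_filter_trace_mul_eq_mul_card {α : L} (hα : α ≠ 0) (c : K) :
    #{y | Algebra.trace K L (α * y) = c} * Fintype.card K = Fintype.card L :=
  AddMonoidHom.card_fiber_mul_card_of_surjective
    ((Algebra.trace K L).comp (LinearMap.mulLeft K α)).toAddMonoidHom
    (Algebra.trace_mul_left_surjective K hα) c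

theorem Algebra.card_filter_trace_mul_eq_and_trace_mul_eq_mul_card {α β : L}
    (h : LinearIndependent K ![α, β]) (c d : K) :
    #{y | Algebra.trace K L (α * y) = c ∧ Algebra.trace K L (β * y) = d} * Fintype.card K ^ 2 =
      Fintype.card L := by
  have := AddMonoidHom.card_fiber_mul_card_of_surjective
    (((Algebra.trace K L).comp (LinearMap.mulLeft K α)).prod
      ((Algebra.trace K L).comp (LinearMap.mulLeft K β))).toAddMonoidHom
    (Algebra.trace_mul_left_prod_surjective K h) (c, d)
  simpa [Prod.ext_iff, sq] using this

end Trace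

theorem card_galoisField {m : ℕ} (hm : m ≠ 0) : Fintype.card (GaloisField 2 m) = 2 ^ m := by
  rw [← Nat.card_eq_fintype_card, GaloisField.card 2 m hm]

section GaloisField

variable {m : ℕ}

theorem tr_add (x y : GaloisField 2 m) : Tr m (x + y) = Tr m x + Tr m y := map_add _ x y

theorem tr_zero : Tr m 0 = 0 := map_zero _

theorem tr_one (hodd : Odd m) : Tr m 1 = 1 := by
  rw [Tr, ← map_one (algebraMap (ZMod 2) (GaloisField 2 m)), Algebra.trace_algebraMap,
    GaloisField.finrank 2 hodd.pos.ne', nsmul_eq_mul, mul_one]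
  exact ZMod.natCast_eq_one_iff_odd.2 hodd

theorem card_filter_tr_mul_eq (hm : m ≠ 0) {α : GaloisField 2 m} (hα : α ≠ 0) (c : ZMod 2) :
    #{y | Tr m (α * y) = c} = 2 ^ (m - 1) := by
  have h := Algebra.card_filter_trace_mul_eq_mul_card (ZMod 2) hα c
  rw [ZMod.card, card_galoisField hm, ← Nat.pow_pred_mul (Nat.pos_of_ne_zero hm)] at h
  exact Nat.eq_of_mul_eq_mul_right two_pos h

theorem card_filter_tr_mul_eq_and_tr_mul_eq (hm : 2 ≤ m) {α β : GaloisField 2 m} (hα : α ≠ 0)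
    (hβ : β ≠ 0) (hαβ : α ≠ β) (c d : ZMod 2) :
    #{y | Tr m (α * y) = c ∧ Tr m (β * y) = d} = 2 ^ (m - 2) := by
  have hli : LinearIndependent (ZMod 2) ![α, β] := linearIndependent_zmod_two_pair hα hβ hαβ
  have h := Algebra.card_filter_trace_mul_eq_and_trace_mul_eq_mul_card (ZMod 2) hli c d
  have hcard : 2 ^ m = 2 ^ (m - 2) * 2 ^ 2 := by rw [← pow_add, Nat.sub_add_cancel hm]
  rw [ZMod.card, card_galoisField (by omega), hcard] at h
  exact Nat.eq_of_mul_eq_mul_right (by positivity) h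

theorem sq_add_one_ne_zero {x : GaloisField 2 m} (hx : x ≠ 1) : x ^ 2 + 1 ≠ 0 := by
  rwa [Ne, CharTwo.add_eq_zero, ← one_pow 2, CharTwo.sq_inj]

theorem ne_inv_of_ne_one {r : GaloisField 2 m} (hr0 : r ≠ 0) (hr1 : r ≠ 1) : r ≠ r⁻¹ := by
  intro h
  apply sq_add_one_ne_zero hr1
  rw [CharTwo.add_eq_zero, sq]
  nth_rw 2 [h]
  exact mul_inv_cancel₀ hr0

noncomputable def rowWeight (m : ℕ) (a b x : GaloisField 2 m) : ℕ :=
  #{y | Tr m (y * x ^ 2 + x + y) = 0 ∧ Tr m (a * x * y + b * x) = 1}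

noncomputable def weight (m : ℕ) (a b : GaloisField 2 m) : ℕ :=
  #{p : GaloisField 2 m × GaloisField 2 m | p.1 ≠ 0 ∧ Tr m (p.2 * p.1 ^ 2 + p.1 + p.2) = 0 ∧
    Tr m (a * p.1 * p.2 + b * p.1) = 1}

theorem weight_eq_sum_rowWeight (a b : GaloisField 2 m) :
    weight m a b = ∑ x ∈ univ.erase 0, rowWeight m a b x := by
  rw [weight, card_filter_prod_eq_sum (· ≠ 0) fun x y =>
    Tr m (y * x ^ 2 + x + y) = 0 ∧ Tr m (a * x * y + b * x) = 1, filter_ne']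
  rfl

theorem rowWeight_eq (a b x : GaloisField 2 m) :
    rowWeight m a b x =
      #{y | Tr m ((x ^ 2 + 1) * y) = Tr m x ∧ Tr m (a * x * y) = Tr m (b * x) + 1} := by
  refine congrArg card (filter_congr fun y _ => ?_)
  rw [show y * x ^ 2 + x + y = (x ^ 2 + 1) * y + x by ring, tr_add, tr_add,
    CharTwo.add_eq_zero, CharTwo.add_eq_iff_eq_add, add_comm (1 : ZMod 2)]

theorem rowWeight_one (hodd : Odd m) (a b : GaloisField 2 m) : rowWeight m a b 1 = 0 := by
  rw [rowWeight_eq, card_eq_zero, filter_eq_empty_iff]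
  rintro y - ⟨h, -⟩
  rw [one_pow, CharTwo.add_self_eq_zero, zero_mul, tr_zero, tr_one hodd] at h
  exact zero_ne_one h

theorem rowWeight_of_ne (hm : 2 ≤ m) {a b x : GaloisField 2 m} (ha : a ≠ 0) (hx0 : x ≠ 0)
    (hx1 : x ≠ 1) (hroot : a * x ≠ x ^ 2 + 1) : rowWeight m a b x = 2 ^ (m - 2) := by
  rw [rowWeight_eq]
  exact card_filter_tr_mul_eq_and_tr_mul_eq hm (sq_add_one_ne_zero hx1) (mul_ne_zero ha hx0)
    (Ne.symm hroot) _ _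

theorem rowWeight_of_eq (hm : m ≠ 0) {a b x : GaloisField 2 m} (hx1 : x ≠ 1)
    (hroot : a * x = x ^ 2 + 1) :
    rowWeight m a b x = if Tr m ((b + 1) * x) = 1 then 2 ^ (m - 1) else 0 := by
  have htr : Tr m ((b + 1) * x) = 1 ↔ Tr m x = Tr m (b * x) + 1 := by
    rw [add_mul, one_mul, tr_add, add_comm, CharTwo.add_eq_iff_eq_add, add_comm (1 : ZMod 2)]
  rw [rowWeight_eq, hroot]
  split_ifs with h
  · rw [← card_filter_tr_mul_eq hm (sq_add_one_ne_zero hx1) (Tr m x)]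
    simp only [← htr.1 h, and_self]
  · rw [card_eq_zero, filter_eq_empty_iff]
    rintro y - ⟨h1, h2⟩
    exact h (htr.2 (h1.symm.trans h2))

theorem rowWeight_zero_left (hm : m ≠ 0) {b x : GaloisField 2 m} (hx1 : x ≠ 1) :
    rowWeight m 0 b x = if Tr m (b * x) = 1 then 2 ^ (m - 1) else 0 := by
  rw [rowWeight_eq]
  simp only [zero_mul, tr_zero]
  split_ifs with h
  · simp only [h, CharTwo.add_self_eq_zero, and_true]
    exact card_filter_tr_mul_eq hm (sq_add_one_ne_zero hx1) (Tr m x)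
  · rw [card_eq_zero, filter_eq_empty_iff]
    rintro y - ⟨-, h2⟩
    exact h (by rw [← CharTwo.eq_add_iff_add_eq.1 h2, zero_add])

theorem zero_notMem_ups1 : (0 : GaloisField 2 m) ∉ Ups1 m := by
  rintro ⟨r, hr0, hr1, h⟩
  exact ne_inv_of_ne_one hr0 hr1 (CharTwo.add_eq_zero.1 h.symm)

theorem filter_mul_eq_sq_add_one_eq_empty {a : GaloisField 2 m} (ha : a ≠ 0)
    (hU : a ∉ Ups1 m) : ({x | a * x = x ^ 2 + 1} : Finset (GaloisField 2 m)) = ∅ := by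
  refine filter_eq_empty_iff.2 fun x _ hx => hU ⟨x, ?_, ?_, ?_⟩
  · rintro rfl
    simp at hx
  · rintro rfl
    rw [one_pow, CharTwo.add_self_eq_zero, mul_one] at hx
    exact ha hx
  · have hx0 : x ≠ 0 := by rintro rfl; simp at hx
    refine mul_right_cancel₀ hx0 (hx.trans ?_)
    rw [add_mul, inv_mul_cancel₀ hx0, sq]

theorem filter_add_inv_mul_eq_sq_add_one {r : GaloisField 2 m} (hr0 : r ≠ 0) :
    ({x | (r + r⁻¹) * x = x ^ 2 + 1} : Finset (GaloisField 2 m)) = {r, r⁻¹} := by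
  ext x
  have hfac : (x + r) * (x + r⁻¹) = (r + r⁻¹) * x + (x ^ 2 + 1) := by
    linear_combination mul_inv_cancel₀ hr0
  simp only [mem_filter, mem_univ, true_and, mem_insert, mem_singleton]
  rw [← CharTwo.add_eq_zero, ← hfac, mul_eq_zero, CharTwo.add_eq_zero, CharTwo.add_eq_zero]

theorem weight_zero_left_eq (hodd : Odd m) {b : GaloisField 2 m} (hb : b ≠ 0) :
    weight m 0 b = if Tr m b = 1 then 2 ^ (m - 1) * (2 ^ (m - 1) - 1)
      else 2 ^ (m - 1) * 2 ^ (m - 1) := by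
  set T : Finset (GaloisField 2 m) := ({y | Tr m (b * y) = 1} : Finset _).erase 1
  have hrow : ∀ x ∈ univ.erase 0, rowWeight m 0 b x = if x ∈ T then 2 ^ (m - 1) else 0 := by
    intro x _
    rcases eq_or_ne x 1 with rfl | hx1
    · simp [T, rowWeight_one hodd]
    · simp [T, hx1, rowWeight_zero_left hodd.pos.ne' hx1]
  have hT : T ⊆ univ.erase 0 := by
    intro x hx
    simp only [T, mem_erase, mem_filter, mem_univ, true_and, and_true] at hx ⊢
    rintro rfl
    simp [tr_zero] at hx
  rw [weight_eq_sum_rowWeight, sum_congr rfl hrow, sum_ite_mem, inter_eq_right.2 hT, sum_const,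
    smul_eq_mul, card_erase_eq_ite, card_filter_tr_mul_eq hodd.pos.ne' hb, mul_comm]
  simp

theorem weight_eq_of_ne_zero (hm : 2 ≤ m) (hodd : Odd m) {a b : GaloisField 2 m} (ha : a ≠ 0) :
    weight m a b = (2 ^ m - 2 - #{x | a * x = x ^ 2 + 1}) * 2 ^ (m - 2) +
      ∑ x ∈ {x | a * x = x ^ 2 + 1}, if Tr m ((b + 1) * x) = 1 then 2 ^ (m - 1) else 0 := by
  set R : Finset (GaloisField 2 m) := {x | a * x = x ^ 2 + 1}
  have h1R : (1 : GaloisField 2 m) ∉ R := by simpa [R, CharTwo.add_self_eq_zero] using ha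
  have h0R : (0 : GaloisField 2 m) ∉ R := by simp [R]
  have hE : insert 1 R ⊆ univ.erase 0 :=
    insert_subset (by simp) fun x hx => mem_erase.2 ⟨by rintro rfl; exact h0R hx, mem_univ x⟩
  have hgen : ∀ x ∈ univ.erase 0 \ insert 1 R, rowWeight m a b x = 2 ^ (m - 2) := by
    intro x hx
    simp only [mem_sdiff, mem_erase, mem_insert, mem_univ, not_or, R, mem_filter, true_and] at hx
    exact rowWeight_of_ne hm ha hx.1.1 hx.2.1 hx.2.2
  have hroot : ∀ x ∈ R, rowWeight m a b x =
      if Tr m ((b + 1) * x) = 1 then 2 ^ (m - 1) else 0 := by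
    intro x hx
    exact rowWeight_of_eq (by omega) (fun h => h1R (h ▸ hx)) (mem_filter.1 hx).2
  rw [weight_eq_sum_rowWeight, ← sum_sdiff hE, sum_congr rfl hgen, sum_const, smul_eq_mul,
    card_sdiff_of_subset hE, card_insert_of_notMem h1R, sum_insert h1R, rowWeight_one hodd,
    zero_add, sum_congr rfl hroot, card_erase_of_mem (mem_univ 0), card_univ,
    card_galoisField (by omega), show 2 ^ m - 1 - (#R + 1) = 2 ^ m - 2 - #R by omega]

theorem two_pow_sub_one_eq_and_two_pow_eq {m : ℕ} (hm : 2 ≤ m) :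
    2 ^ (m - 1) = 2 * 2 ^ (m - 2) ∧ 2 ^ m = 4 * 2 ^ (m - 2) := by
  refine ⟨?_, ?_⟩
  · rw [← pow_succ']
    congr 1
    omega
  · rw [show (4 : ℕ) = 2 ^ 2 from rfl, ← pow_add]
    congr 1
    omega

theorem weight_of_notMem_ups1 (hm : 2 ≤ m) (hodd : Odd m) {a : GaloisField 2 m}
    (b : GaloisField 2 m) (ha : a ≠ 0) (hU : a ∉ Ups1 m) :
    weight m a b = 2 ^ (m - 1) * (2 ^ (m - 1) - 1) := by
  obtain ⟨h1, h0⟩ := two_pow_sub_one_eq_and_two_pow_eq hm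
  have hq : 1 ≤ 2 ^ (m - 2) := Nat.one_le_two_pow
  rw [weight_eq_of_ne_zero hm hodd ha, filter_mul_eq_sq_add_one_eq_empty ha hU, card_empty,
    sum_empty, add_zero, Nat.sub_zero, h1, h0]
  zify [show 2 ≤ 4 * 2 ^ (m - 2) by omega, show 1 ≤ 2 * 2 ^ (m - 2) by omega]
  ring

theorem weight_add_inv (hm : 2 ≤ m) (hodd : Odd m) {r : GaloisField 2 m} (b : GaloisField 2 m)
    (hr0 : r ≠ 0) (hr1 : r ≠ 1) :
    weight m (r + r⁻¹) b = (2 ^ m - 4) * 2 ^ (m - 2) +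
      ((if Tr m ((b + 1) * r) = 1 then 2 ^ (m - 1) else 0) +
        (if Tr m ((b + 1) * r⁻¹) = 1 then 2 ^ (m - 1) else 0)) := by
  have ha : r + r⁻¹ ≠ 0 := ne_of_mem_of_not_mem (s := Ups1 m) ⟨r, hr0, hr1, rfl⟩ zero_notMem_ups1
  rw [weight_eq_of_ne_zero hm hodd ha, filter_add_inv_mul_eq_sq_add_one hr0,
    card_pair (ne_inv_of_ne_one hr0 hr1), sum_pair (ne_inv_of_ne_one hr0 hr1), Nat.sub_sub]

theorem weight_add_inv_of_tr_eq_one (hm : 2 ≤ m) (hodd : Odd m) {r b : GaloisField 2 m}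
    (hr0 : r ≠ 0) (hr1 : r ≠ 1) (htr : Tr m ((b + 1) * (r + r⁻¹)) = 1) :
    weight m (r + r⁻¹) b = 2 ^ (m - 1) * (2 ^ (m - 1) - 1) := by
  obtain ⟨h1, h0⟩ := two_pow_sub_one_eq_and_two_pow_eq hm
  have hq : 1 ≤ 2 ^ (m - 2) := Nat.one_le_two_pow
  rw [mul_add, tr_add] at htr
  rw [weight_add_inv hm hodd b hr0 hr1]
  rcases (Tr m ((b + 1) * r)).eq_zero_or_eq_one_of_two with ht | ht <;>
    rcases (Tr m ((b + 1) * r⁻¹)).eq_zero_or_eq_one_of_two with ht' | ht' <;>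
    simp only [ht, ht'] at htr ⊢ <;> try exact absurd htr (by decide)
  all_goals
    simp only [if_pos, if_neg, zero_ne_one, not_false_eq_true, add_zero, zero_add, h1, h0]
    zify [show 4 ≤ 4 * 2 ^ (m - 2) by omega, show 1 ≤ 2 * 2 ^ (m - 2) by omega]
    ring

theorem weight_add_inv_of_tr_eq_zero (hm : 2 ≤ m) (hodd : Odd m) {r b : GaloisField 2 m}
    (hr0 : r ≠ 0) (hr1 : r ≠ 1) (htr : Tr m ((b + 1) * (r + r⁻¹)) = 0) :
    weight m (r + r⁻¹) b = 2 ^ m * (2 ^ (m - 2) - 1) ∨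
      weight m (r + r⁻¹) b = 2 ^ (2 * m - 2) := by
  obtain ⟨h1, h0⟩ := two_pow_sub_one_eq_and_two_pow_eq hm
  have hq : 1 ≤ 2 ^ (m - 2) := Nat.one_le_two_pow
  have h22 : 2 ^ (2 * m - 2) = 4 * 2 ^ (m - 2) * 2 ^ (m - 2) := by
    rw [← h0, ← pow_add]; congr 1; omega
  rw [mul_add, tr_add] at htr
  rw [weight_add_inv hm hodd b hr0 hr1, h22]
  rcases (Tr m ((b + 1) * r)).eq_zero_or_eq_one_of_two with ht | ht <;>
    rcases (Tr m ((b + 1) * r⁻¹)).eq_zero_or_eq_one_of_two with ht' | ht' <;>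
    simp only [ht, ht'] at htr ⊢ <;> try exact absurd htr (by decide)
  · left
    simp only [if_neg zero_ne_one, add_zero, h0]
    zify [show 4 ≤ 4 * 2 ^ (m - 2) by omega, hq]
    ring
  · right
    simp only [if_true, h1, h0]
    zify [show 4 ≤ 4 * 2 ^ (m - 2) by omega]
    ring

end GaloisField

theorem stmt12 (m : ℕ) (hm : 3 ≤ m) (hodd : Odd m) (a b : GaloisField 2 m)
    (hab : (a, b) ≠ (0, 0)) :
    let wt : ℕ := (Finset.univ.filter (fun p : GaloisField 2 m × GaloisField 2 m =>
      p.1 ≠ 0 ∧ Tr m (p.2 * p.1 ^ 2 + p.1 + p.2) = 0 ∧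
        Tr m (a * p.1 * p.2 + b * p.1) = 1)).card
    ((a = 0 ∧ b ≠ 0 ∧ Tr m b = 1) ∨ (a ∉ Ups1 m ∧ a ≠ 0) ∨
        (a ∈ Ups1 m ∧ Tr m ((b + 1) * a) = 1) →
      wt = 2 ^ (m - 1) * (2 ^ (m - 1) - 1)) ∧
    (¬((a = 0 ∧ b ≠ 0 ∧ Tr m b = 1) ∨ (a ∉ Ups1 m ∧ a ≠ 0) ∨
        (a ∈ Ups1 m ∧ Tr m ((b + 1) * a) = 1)) →
      wt = 2 ^ m * (2 ^ (m - 2) - 1) ∨ wt = 2 ^ (2 * m - 2)) := by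
  intro wt
  change (_ → weight m a b = _) ∧ (_ → weight m a b = _ ∨ weight m a b = _)
  have hm2 : 2 ≤ m := by omega
  rcases eq_or_ne a 0 with rfl | ha
  · have hb : b ≠ 0 := by rintro rfl; exact hab rfl
    rw [weight_zero_left_eq hodd hb]
    rcases (Tr m b).eq_zero_or_eq_one_of_two with htr | htr
    · refine ⟨by simp [htr, zero_notMem_ups1], fun _ => Or.inr ?_⟩
      rw [if_neg (by simp [htr]), ← pow_add]
      congr 1
      omega
    · exact ⟨fun _ => if_pos htr, by simp [htr, hb]⟩
  · by_cases hU : a ∈ Ups1 m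
    · obtain ⟨r, hr0, hr1, rfl⟩ := id hU
      rcases (Tr m ((b + 1) * (r + r⁻¹))).eq_zero_or_eq_one_of_two with htr | htr
      · exact ⟨by simp [htr, ha, hU],
          fun _ => weight_add_inv_of_tr_eq_zero hm2 hodd hr0 hr1 htr⟩
      · exact ⟨fun _ => weight_add_inv_of_tr_eq_one hm2 hodd hr0 hr1 htr, by simp [htr, hU]⟩
    · exact ⟨fun _ => weight_of_notMem_ups1 hm2 hodd b ha hU, by simp [ha, hU]⟩
end
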